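/- Let 𝒜 = I − A⁽ᴺ⁾ ⊗ ⋯ ⊗ A⁽¹⁾ and suppose for each i, zᵢ is a unit vector with A⁽ⁱ⁾A⁽ⁱ⁾ᵀ zᵢ = σ_min²(A⁽ⁱ⁾) zᵢ. Then λ_min(𝒜𝒜ᵀ) ≤ 1 + ∏_{i=1}^N σ_min²(A⁽ⁱ⁾) − 2 ∏_{i=1}^N zᵢᵀ H(A⁽ⁱ⁾) zᵢ. -/

import Mathlib

open Matrix

/-- The spectral norm (largest singular value) of a real matrix, as the operator
norm of the induced map between Euclidean spaces. -/
noncomputable def specNorm {m n : Type*} [Fintype m] [Fintype n] [DecidableEq n]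
    (M : Matrix m n ℝ) : ℝ :=
  ‖LinearMap.toContinuousLinearMap (Matrix.toEuclideanLin M)‖

/-- The smallest singular value of a real matrix: the infimum of `‖Mx‖` over
unit vectors `x`. -/
noncomputable def sigmaMin {m n : Type*} [Fintype m] [Fintype n] [DecidableEq n]
    (M : Matrix m n ℝ) : ℝ :=
  sInf ((fun x => ‖Matrix.toEuclideanLin M x‖) '' Metric.sphere 0 1)

/-- Symmetric part of a square matrix. -/
noncomputable def Hpart {m : Type*} (A : Matrix m m ℝ) : Matrix m m ℝ := (1/2 : ℝ) • (A + Aᵀ)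

/-- The Kronecker product of a finite family of square matrices, realized on the
dependent-product index type. -/
noncomputable def kronFamily {N : ℕ} {n : Fin N → Type*} [∀ i, Fintype (n i)]
    (A : ∀ i, Matrix (n i) (n i) ℝ) : Matrix (∀ i, n i) (∀ i, n i) ℝ :=
  fun a b => ∏ i, A i (a i) (b i)

/-- The largest eigenvalue of a (symmetric) matrix, via the Rayleigh-quotient
characterization: the supremum of `x ⬝ᵥ M x` over unit vectors `x`. -/
noncomputable def lamMax {m : Type*} [Fintype m] (M : Matrix m m ℝ) : ℝ :=
  sSup {r | ∃ x : m → ℝ, x ⬝ᵥ x = 1 ∧ r = x ⬝ᵥ M *ᵥ x}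

/-- The smallest eigenvalue of a (symmetric) matrix, via the Rayleigh-quotient
characterization: the infimum of `x ⬝ᵥ M x` over unit vectors `x`. -/
noncomputable def lamMin {m : Type*} [Fintype m] (M : Matrix m m ℝ) : ℝ :=
  sInf {r | ∃ x : m → ℝ, x ⬝ᵥ x = 1 ∧ r = x ⬝ᵥ M *ᵥ x}


/-!
Evaluate the Rayleigh quotient of `(1 - K)(1 - K)ᵀ`, `K = A N ⊗ ⋯ ⊗ A 1`, at the unit pure tensor
`x = z N ⊗ ⋯ ⊗ z 1`. It expands to `x ⬝ x - 2 x ⬝ K x + x ⬝ (K Kᵀ) x`, and since `K Kᵀ` is the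
Kronecker product of the `A i (A i)ᵀ`, each term factors over the tensor: the three factors are
`1`, `∏ z i ⬝ A i z i = ∏ z i ⬝ H(A i) z i` and `∏ σ_min(A i)²`.
-/

section Kronecker

variable {N : ℕ} {n : Fin N → Type*} [∀ i, Fintype (n i)]

def kronVec (z : ∀ i, n i → ℝ) : (∀ i, n i) → ℝ := fun a => ∏ i, z i (a i)

lemma kronVec_dotProduct_kronVec (z w : ∀ i, n i → ℝ) :
    kronVec z ⬝ᵥ kronVec w = ∏ i, z i ⬝ᵥ w i := by
  simp only [kronVec, dotProduct, ← Finset.prod_mul_distrib]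
  rw [Fintype.prod_sum]

lemma kronFamily_mulVec_kronVec (A : ∀ i, Matrix (n i) (n i) ℝ) (z : ∀ i, n i → ℝ) :
    kronFamily A *ᵥ kronVec z = kronVec fun i => A i *ᵥ z i := by
  funext a
  simp only [mulVec, dotProduct, kronFamily, kronVec, ← Finset.prod_mul_distrib]
  rw [Fintype.prod_sum]

lemma kronVec_dotProduct_kronFamily_mulVec (A : ∀ i, Matrix (n i) (n i) ℝ)
    (z w : ∀ i, n i → ℝ) :
    kronVec z ⬝ᵥ kronFamily A *ᵥ kronVec w = ∏ i, z i ⬝ᵥ A i *ᵥ w i := by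
  rw [kronFamily_mulVec_kronVec, kronVec_dotProduct_kronVec]

lemma kronFamily_transpose (A : ∀ i, Matrix (n i) (n i) ℝ) :
    (kronFamily A)ᵀ = kronFamily fun i => (A i)ᵀ := rfl

lemma kronFamily_mul (A B : ∀ i, Matrix (n i) (n i) ℝ) :
    kronFamily A * kronFamily B = kronFamily fun i => A i * B i := by
  ext a b
  simp only [Matrix.mul_apply, kronFamily, ← Finset.prod_mul_distrib]
  rw [Fintype.prod_sum]

end Kronecker

lemma dotProduct_Hpart_mulVec_self {m : Type*} [Fintype m] (A : Matrix m m ℝ) (x : m → ℝ) :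
    x ⬝ᵥ Hpart A *ᵥ x = x ⬝ᵥ A *ᵥ x := by
  rw [Hpart, Matrix.smul_mulVec, Matrix.add_mulVec, dotProduct_smul, dotProduct_add,
    dotProduct_transpose_mulVec, smul_eq_mul]
  ring

lemma dotProduct_one_sub_mul_transpose_mulVec {m : Type*} [Fintype m] [DecidableEq m]
    (M : Matrix m m ℝ) (x : m → ℝ) :
    x ⬝ᵥ ((1 - M) * (1 - M)ᵀ) *ᵥ x = x ⬝ᵥ x - 2 * x ⬝ᵥ M *ᵥ x + x ⬝ᵥ (M * Mᵀ) *ᵥ x := by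
  simp only [Matrix.transpose_sub, Matrix.transpose_one, Matrix.sub_mul, Matrix.mul_sub,
    Matrix.one_mul, Matrix.mul_one, Matrix.sub_mulVec, Matrix.one_mulVec, dotProduct_sub,
    dotProduct_transpose_mulVec]
  ring

lemma lamMin_le_of_posSemidef {m : Type*} [Fintype m] {M : Matrix m m ℝ} (hM : M.PosSemidef)
    {x : m → ℝ} (hx : x ⬝ᵥ x = 1) : lamMin M ≤ x ⬝ᵥ M *ᵥ x :=
  csInf_le ⟨0, by rintro r ⟨y, -, rfl⟩; exact hM.dotProduct_mulVec_nonneg y⟩ ⟨x, hx, rfl⟩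

theorem lamMin_upper_bound {N : ℕ} {n : Fin N → Type*}
    [∀ i, Fintype (n i)] [∀ i, DecidableEq (n i)]
    (A : ∀ i, Matrix (n i) (n i) ℝ) (z : ∀ i, n i → ℝ)
    (hz1 : ∀ i, z i ⬝ᵥ z i = 1)
    (hz2 : ∀ i, (A i * (A i)ᵀ) *ᵥ z i = (sigmaMin (A i)) ^ 2 • z i) :
    lamMin ((1 - kronFamily A) * (1 - kronFamily A)ᵀ) ≤
      1 + ∏ i, (sigmaMin (A i)) ^ 2 - 2 * ∏ i, z i ⬝ᵥ (Hpart (A i)) *ᵥ (z i) := by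
  have hx : kronVec z ⬝ᵥ kronVec z = 1 := by simp [kronVec_dotProduct_kronVec, hz1]
  have hsing : ∀ i, z i ⬝ᵥ (A i * (A i)ᵀ) *ᵥ z i = sigmaMin (A i) ^ 2 := by
    simp [hz2, hz1]
  calc lamMin ((1 - kronFamily A) * (1 - kronFamily A)ᵀ)
      ≤ kronVec z ⬝ᵥ ((1 - kronFamily A) * (1 - kronFamily A)ᵀ) *ᵥ kronVec z :=
        lamMin_le_of_posSemidef (Matrix.posSemidef_self_mul_conjTranspose _) hx
    _ = _ := by
        rw [dotProduct_one_sub_mul_transpose_mulVec, kronFamily_transpose, kronFamily_mul,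
          kronVec_dotProduct_kronFamily_mulVec, kronVec_dotProduct_kronFamily_mulVec, hx]
        simp only [hsing, dotProduct_Hpart_mulVec_self]
        ring
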